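/- arXiv:1905.05937 — 2 statements merged into one kernel-verified Lean document; each statement's English description precedes it below -/
import Mathlib

section
/- Let ω(x,y) = (2x/(x²+(y+1)²), (x²+y²−1)/(x²+(y+1)²)). Then for every x ∈ ℝ: (i) |ω(x,0)| = 1, i.e. ω(x,0) ∈ S¹; and (ii) −∂_yω(x,0) = (2/(1+x²))·ω(x,0); consequently the inward normal derivative −∂_yω(x,0) is orthogonal to the tangent space T_{ω(x,0)}S¹, so ω is a solution of the stationary free boundary problem on the half-plane. -/
noncomputable section

/-- The harmonic extension of the canonical half-harmonic map. -/
def omega (x y : ℝ) : ℝ × ℝ :=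
  (2 * x / (x ^ 2 + (y + 1) ^ 2), (x ^ 2 + y ^ 2 - 1) / (x ^ 2 + (y + 1) ^ 2))

/-- Euclidean dot product on `ℝ × ℝ`. -/
def dot (p q : ℝ × ℝ) : ℝ := p.1 * q.1 + p.2 * q.2

lemma dot_comm (p q : ℝ × ℝ) : dot p q = dot q p := by
  simp only [dot]
  ring

lemma dot_smul_left (c : ℝ) (p q : ℝ × ℝ) : dot (c • p) q = c * dot p q := by
  simp only [dot, Prod.smul_fst, Prod.smul_snd, smul_eq_mul]
  ring

lemma dot_omega_zero_self (x : ℝ) : dot (omega x 0) (omega x 0) = 1 := by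
  have hden : x ^ 2 + (0 + 1 : ℝ) ^ 2 ≠ 0 := by positivity
  simp only [dot, omega]
  field_simp
  ring

lemma hasDerivAt_omega_zero (x : ℝ) :
    HasDerivAt (omega x) (-(2 / (1 + x ^ 2)) • omega x 0) 0 := by
  have hden : x ^ 2 + (0 + 1 : ℝ) ^ 2 ≠ 0 := by positivity
  have hD : HasDerivAt (fun y : ℝ => x ^ 2 + (y + 1) ^ 2) 2 0 := by
    simpa using (((hasDerivAt_id (0 : ℝ)).add_const 1).pow 2).const_add (x ^ 2)
  have hN : HasDerivAt (fun y : ℝ => x ^ 2 + y ^ 2 - 1) 0 0 := by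
    simpa using ((hasDerivAt_pow 2 (0 : ℝ)).const_add (x ^ 2)).sub_const 1
  convert ((hasDerivAt_const 0 (2 * x)).div hD hden).prodMk (hN.div hD hden) using 1
  · rfl
  · refine Prod.ext ?_ ?_ <;>
      simp only [omega, Prod.smul_fst, Prod.smul_snd, smul_eq_mul] <;> field_simp <;> ring

/-- the boundary trace of `ω` takes values in the unit circle, the inward
normal derivative `−∂_y ω(x,0)` equals `(2/(1+x²)) · ω(x,0)`, and consequently it is
orthogonal to the tangent space `T_{ω(x,0)}S¹ = {w : w · ω(x,0) = 0}`. -/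
theorem omega_free_boundary :
    ∀ x : ℝ,
      dot (omega x 0) (omega x 0) = 1 ∧
      -deriv (fun y => omega x y) 0 = (2 / (1 + x ^ 2)) • omega x 0 ∧
      ∀ w : ℝ × ℝ, dot w (omega x 0) = 0 →
        dot (-deriv (fun y => omega x y) 0) w = 0 := by
  intro x
  have hnormal : -deriv (fun y => omega x y) 0 = (2 / (1 + x ^ 2)) • omega x 0 := by
    rw [(hasDerivAt_omega_zero x).deriv, neg_smul, neg_neg]
  refine ⟨dot_omega_zero_self x, hnormal, fun w hw => ?_⟩
  rw [hnormal, dot_smul_left, dot_comm, hw, mul_zero]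
end
end

section
/- Let γ ∈ (0,1) and β > 0 satisfy 4β + 1 < 4γ², and define Φ(u,v,τ) = v^γ (u²+v²+τ)^{−β}. Then Φ is a strict supersolution of the heat equation on the upper half-plane for positive times: for all u ∈ ℝ, v > 0 and τ > 0, −∂_τΦ(u,v,τ) + ∂_{uu}Φ(u,v,τ) + ∂_{vv}Φ(u,v,τ) < 0. -/
noncomputable section

/-- The barrier `Φ(u,v,τ) = v^γ (u²+v²+τ)^{−β}`. -/
def barrier (γ β : ℝ) (u v τ : ℝ) : ℝ := v ^ γ * (u ^ 2 + v ^ 2 + τ) ^ (-β)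

/-- for `γ ∈ (0,1)` and `β > 0` with `4β + 1 < 4γ²`, the function
`Φ(u,v,τ) = v^γ (u²+v²+τ)^{−β}` is a strict supersolution of the heat equation on the
upper half-plane for positive times:
`−∂_τΦ + ∂_{uu}Φ + ∂_{vv}Φ < 0` for all `u ∈ ℝ`, `v > 0`, `τ > 0`. -/
theorem barrier_strict_supersolution (γ β : ℝ)
    (hγ0 : 0 < γ) (hγ1 : γ < 1) (hβ : 0 < β) (hβγ : 4 * β + 1 < 4 * γ ^ 2) :
    ∀ u v τ : ℝ, 0 < v → 0 < τ →
      -deriv (fun τ' => barrier γ β u v τ') τ +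
        deriv (fun u' => deriv (fun u'' => barrier γ β u'' v τ) u') u +
        deriv (fun v' => deriv (fun v'' => barrier γ β u v'' τ) v') v < 0 := by
  intro u v τ hv hτ
  have hs : (0:ℝ) < u ^ 2 + v ^ 2 + τ := by positivity
  -- τ-derivative
  have hDτ : deriv (fun τ' => barrier γ β u v τ') τ
      = v ^ γ * (1 * (-β) * (u ^ 2 + v ^ 2 + τ) ^ (-β - 1)) := by
    have h1 : HasDerivAt (fun τ' : ℝ => u ^ 2 + v ^ 2 + τ') 1 τ :=
      (hasDerivAt_id τ).const_add (u ^ 2 + v ^ 2)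
    exact ((h1.rpow_const (Or.inl hs.ne')).const_mul (v ^ γ)).deriv
  -- inner u-derivative as a function
  have hinner_u : (fun u' => deriv (fun u'' => barrier γ β u'' v τ) u')
      = fun u' => v ^ γ * (2 * u' * (-β) * (u' ^ 2 + v ^ 2 + τ) ^ (-β - 1)) := by
    funext u'
    have hs' : (0:ℝ) < u' ^ 2 + v ^ 2 + τ := by positivity
    have h0 : HasDerivAt (fun y : ℝ => y ^ 2 + v ^ 2 + τ) (2 * u') u' := by
      simpa using ((hasDerivAt_pow 2 u').add_const (v ^ 2)).add_const τ
    exact ((h0.rpow_const (Or.inl hs'.ne')).const_mul (v ^ γ)).deriv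
  -- second u-derivative
  have h0u : HasDerivAt (fun y : ℝ => y ^ 2 + v ^ 2 + τ) (2 * u) u := by
    simpa using ((hasDerivAt_pow 2 u).add_const (v ^ 2)).add_const τ
  have hf1 : HasDerivAt (fun y : ℝ => 2 * y * (-β)) (2 * 1 * (-β)) u :=
    ((hasDerivAt_id u).const_mul 2).mul_const (-β)
  have hf2 : HasDerivAt (fun y : ℝ => (y ^ 2 + v ^ 2 + τ) ^ (-β - 1))
      (2 * u * (-β - 1) * (u ^ 2 + v ^ 2 + τ) ^ (-β - 1 - 1)) u :=
    h0u.rpow_const (Or.inl hs.ne')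
  have hDuu : deriv (fun u' => deriv (fun u'' => barrier γ β u'' v τ) u') u
      = v ^ γ * (2 * 1 * (-β) * ((u ^ 2 + v ^ 2 + τ) ^ (-β - 1))
          + 2 * u * (-β) * (2 * u * (-β - 1) * (u ^ 2 + v ^ 2 + τ) ^ (-β - 1 - 1))) := by
    rw [hinner_u]
    exact ((hf1.mul hf2).const_mul (v ^ γ)).deriv
  -- inner v-derivative on a neighborhood
  have hgv : ∀ v' : ℝ, 0 < v' →
      HasDerivAt (fun v'' => barrier γ β u v'' τ)
        ((γ * v' ^ (γ - 1)) * ((u ^ 2 + v' ^ 2 + τ) ^ (-β))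
          + v' ^ γ * (2 * v' * (-β) * (u ^ 2 + v' ^ 2 + τ) ^ (-β - 1))) v' := by
    intro v' hv'
    have hs' : (0:ℝ) < u ^ 2 + v' ^ 2 + τ := by positivity
    have h1 : HasDerivAt (fun x : ℝ => x ^ γ) (γ * v' ^ (γ - 1)) v' :=
      Real.hasDerivAt_rpow_const (Or.inl hv'.ne')
    have h0 : HasDerivAt (fun x : ℝ => u ^ 2 + x ^ 2 + τ) (2 * v') v' := by
      simpa using ((hasDerivAt_pow 2 v').const_add (u ^ 2)).add_const τ
    exact h1.mul (h0.rpow_const (Or.inl hs'.ne'))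
  have hEq : deriv (fun v' => deriv (fun v'' => barrier γ β u v'' τ) v') v
      = deriv (fun v' => (γ * v' ^ (γ - 1)) * ((u ^ 2 + v' ^ 2 + τ) ^ (-β))
          + v' ^ γ * (2 * v' * (-β) * (u ^ 2 + v' ^ 2 + τ) ^ (-β - 1))) v := by
    apply Filter.EventuallyEq.deriv_eq
    filter_upwards [Ioi_mem_nhds hv] with v' hv'
    exact (hgv v' hv').deriv
  -- second v-derivative
  have h0v : HasDerivAt (fun x : ℝ => u ^ 2 + x ^ 2 + τ) (2 * v) v := by
    simpa using ((hasDerivAt_pow 2 v).const_add (u ^ 2)).add_const τ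
  have p1 : HasDerivAt (fun x : ℝ => γ * x ^ (γ - 1))
      (γ * ((γ - 1) * v ^ (γ - 1 - 1))) v :=
    (Real.hasDerivAt_rpow_const (Or.inl hv.ne')).const_mul γ
  have p2 : HasDerivAt (fun x : ℝ => (u ^ 2 + x ^ 2 + τ) ^ (-β))
      (2 * v * (-β) * (u ^ 2 + v ^ 2 + τ) ^ (-β - 1)) v :=
    h0v.rpow_const (Or.inl hs.ne')
  have p3 : HasDerivAt (fun x : ℝ => x ^ γ) (γ * v ^ (γ - 1)) v :=
    Real.hasDerivAt_rpow_const (Or.inl hv.ne')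
  have p4 : HasDerivAt (fun y : ℝ => 2 * y * (-β)) (2 * 1 * (-β)) v :=
    ((hasDerivAt_id v).const_mul 2).mul_const (-β)
  have p5 : HasDerivAt (fun x : ℝ => (u ^ 2 + x ^ 2 + τ) ^ (-β - 1))
      (2 * v * (-β - 1) * (u ^ 2 + v ^ 2 + τ) ^ (-β - 1 - 1)) v :=
    h0v.rpow_const (Or.inl hs.ne')
  have hDvv : deriv (fun v' => deriv (fun v'' => barrier γ β u v'' τ) v') v
      = (γ * ((γ - 1) * v ^ (γ - 1 - 1)) * ((u ^ 2 + v ^ 2 + τ) ^ (-β))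
          + γ * v ^ (γ - 1) * (2 * v * (-β) * (u ^ 2 + v ^ 2 + τ) ^ (-β - 1)))
        + (γ * v ^ (γ - 1) * (2 * v * (-β) * (u ^ 2 + v ^ 2 + τ) ^ (-β - 1))
          + v ^ γ * (2 * 1 * (-β) * ((u ^ 2 + v ^ 2 + τ) ^ (-β - 1))
              + 2 * v * (-β) * (2 * v * (-β - 1) * (u ^ 2 + v ^ 2 + τ) ^ (-β - 1 - 1)))) := by
    rw [hEq]
    exact ((p1.mul p2).add (p3.mul (p4.mul p5))).deriv
  rw [hDτ, hDuu, hDvv]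
  -- rewrite rpow atoms
  have e0 : v ^ γ = v ^ (γ - 1) * v := by
    rw [← Real.rpow_add_one hv.ne']; congr 1; ring
  have e2 : v ^ (γ - 1) = v ^ (γ - 1 - 1) * v := by
    rw [← Real.rpow_add_one hv.ne']; congr 1; ring
  have e3 : (u ^ 2 + v ^ 2 + τ) ^ (-β)
      = (u ^ 2 + v ^ 2 + τ) ^ (-β - 1) * (u ^ 2 + v ^ 2 + τ) := by
    rw [← Real.rpow_add_one hs.ne']; congr 1; ring
  have e4 : (u ^ 2 + v ^ 2 + τ) ^ (-β - 1)
      = (u ^ 2 + v ^ 2 + τ) ^ (-β - 1 - 1) * (u ^ 2 + v ^ 2 + τ) := by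
    rw [← Real.rpow_add_one hs.ne']; congr 1; ring
  rw [e3, e4, e0, e2]
  have hP2 : 0 < v ^ (γ - 1 - 1) := Real.rpow_pos_of_pos hv _
  have hA2 : 0 < (u ^ 2 + v ^ 2 + τ) ^ (-β - 1 - 1) := Real.rpow_pos_of_pos hs _
  have hinner : γ * (γ - 1) * (u ^ 2 + v ^ 2 + τ) ^ 2
      - (3 * β + 4 * β * γ) * v ^ 2 * (u ^ 2 + v ^ 2 + τ)
      + 4 * β * (β + 1) * (u ^ 2 + v ^ 2) * v ^ 2 < 0 := by
    have key1 : γ * (γ - 1) * (u ^ 2 + v ^ 2 + τ) ^ 2 < 0 :=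
      mul_neg_of_neg_of_pos (mul_neg_of_pos_of_neg hγ0 (by linarith)) (by positivity)
    have key2 : β * (4 * β + 1 - 4 * γ) < 0 := by
      nlinarith [mul_pos hγ0 (sub_pos.2 hγ1)]
    have key3 : β * (4 * β + 1 - 4 * γ) * (v ^ 2 * (u ^ 2 + v ^ 2 + τ)) ≤ 0 :=
      mul_nonpos_of_nonpos_of_nonneg key2.le (by positivity)
    have key4 : 0 < 4 * β * (β + 1) * τ * v ^ 2 := by positivity
    nlinarith [key1, key3, key4]
  refine lt_of_le_of_lt (le_of_eq ?_)
    (mul_neg_of_pos_of_neg (mul_pos hP2 hA2) hinner)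
  ring
end
end
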